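/- Let (Ω, Σ, μ) be a finite measure space, X a Banach space, f ∈ L̄₁(Ω, Σ, μ, X) with integrable majorant g ∈ L₁(Ω, Σ, μ). Let {Π_n} be a sequence of partitions of Ω such that for each n the upper integral sum of g over Π_n is absolutely convergent, i.e. Σ_i (sup_{t ∈ Δ_i^{(n)}} g(t)) · μ(Δ_i^{(n)}) < ∞ where Π_n = {Δ_i^{(n)}}. Assume there is x ∈ X such that for any choice of sampling points T_n for Π_n, the sequence S(f, Π_n, T_n) converges to x. Then f is RL-integrable and its RL integral equals x. -/

import Mathlib

open MeasureTheory Set Pointwise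

/-- A countable partition of `A` into pairwise disjoint measurable pieces
(possibly empty, so that finite partitions are included). -/
def IsRLPartition {Ω : Type*} [MeasurableSpace Ω] (A : Set Ω) (P : ℕ → Set Ω) : Prop :=
  (∀ i, MeasurableSet (P i)) ∧ Pairwise (Function.onFun Disjoint P) ∧ (⋃ i, P i) = A

/-- `Γ` is finer than (inscribed into) `P`: every piece of `Γ` is contained in a piece of `P`. -/
def IsFinerPartition {Ω : Type*} (Γ P : ℕ → Set Ω) : Prop :=
  ∀ j, ∃ i, Γ j ⊆ P i

/-- `T` is a choice of sampling points for the partition `P`. -/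
def IsSampling {Ω : Type*} (P : ℕ → Set Ω) (T : ℕ → Ω) : Prop :=
  ∀ i, (P i).Nonempty → T i ∈ P i

/-- The RL integral sum `S(f, P, T) = ∑ᵢ μ(Pᵢ) • f(Tᵢ)`. -/
noncomputable def RLSum {Ω X : Type*} [MeasurableSpace Ω] [NormedAddCommGroup X]
    [NormedSpace ℝ X] (μ : Measure Ω) (f : Ω → X) (P : ℕ → Set Ω) (T : ℕ → Ω) : X :=
  ∑' i, (μ (P i)).toReal • f (T i)

/-- Absolute convergence of the RL integral sum. -/
def RLSumAbsConv {Ω X : Type*} [MeasurableSpace Ω] [NormedAddCommGroup X]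
    (μ : Measure Ω) (f : Ω → X) (P : ℕ → Set Ω) (T : ℕ → Ω) : Prop :=
  Summable fun i => (μ (P i)).toReal * ‖f (T i)‖

/-- `f` is RL-integrable over `A` with RL integral `x`. -/
def HasRLIntegral {Ω X : Type*} [MeasurableSpace Ω] [NormedAddCommGroup X] [NormedSpace ℝ X]
    (μ : Measure Ω) (f : Ω → X) (A : Set Ω) (x : X) : Prop :=
  ∀ ε > 0, ∃ P : ℕ → Set Ω, IsRLPartition A P ∧
    ∀ Γ : ℕ → Set Ω, IsRLPartition A Γ → IsFinerPartition Γ P →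
      ∀ T : ℕ → Ω, IsSampling Γ T →
        RLSumAbsConv μ f Γ T ∧ ‖RLSum μ f Γ T - x‖ < ε

/-- `f` has a Lebesgue-integrable majorant, i.e. `f ∈ L̄₁(Ω, Σ, μ, X)`. -/
def HasIntegrableMajorant {Ω X : Type*} [MeasurableSpace Ω] [NormedAddCommGroup X]
    (μ : Measure Ω) (f : Ω → X) : Prop :=
  ∃ g : Ω → ℝ, Integrable g μ ∧ ∀ t, ‖f t‖ ≤ g t

/-- The limit set `I(f)`: all limit points of the net of absolute RL integral sums. -/
def RLLimitSet {Ω X : Type*} [MeasurableSpace Ω] [NormedAddCommGroup X] [NormedSpace ℝ X]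
    (μ : Measure Ω) (f : Ω → X) : Set X :=
  {x | ∀ ε > 0, ∀ P : ℕ → Set Ω, IsRLPartition Set.univ P →
    ∃ Γ : ℕ → Set Ω, IsRLPartition Set.univ Γ ∧ IsFinerPartition Γ P ∧
      ∃ T : ℕ → Ω, IsSampling Γ T ∧ RLSumAbsConv μ f Γ T ∧ ‖RLSum μ f Γ T - x‖ < ε}

/-- `g` is a Bochner-integrable equivalent of `f`: `g` is Bochner integrable and the
RL integral of `f` over every measurable set equals the Bochner integral of `g` over it. -/
def BochnerEquivalent {Ω X : Type*} [MeasurableSpace Ω] [NormedAddCommGroup X] [NormedSpace ℝ X]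
    (μ : Measure Ω) (f g : Ω → X) : Prop :=
  Integrable g μ ∧ ∀ A : Set Ω, MeasurableSet A → HasRLIntegral μ f A (∫ ω in A, g ω ∂μ)

/-- `f : [0,1] → X` is Riemann integrable with Riemann integral `x`. -/
def HasRiemannIntegral {X : Type*} [NormedAddCommGroup X] [NormedSpace ℝ X]
    (f : ℝ → X) (x : X) : Prop :=
  ∀ ε > 0, ∃ δ > 0, ∀ (n : ℕ) (a : ℕ → ℝ) (t : ℕ → ℝ),
    a 0 = 0 → a n = 1 → (∀ i < n, a i ≤ a (i + 1)) →
    (∀ i < n, a (i + 1) - a i < δ) →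
    (∀ i < n, t i ∈ Set.Icc (a i) (a (i + 1))) →
    ‖(∑ i ∈ Finset.range n, (a (i + 1) - a i) • f (t i)) - x‖ < ε

/-
Choose `n` such that every integral sum over `P n` lies within `ε / 2` of `x`, and let `Γ`
refine `Q = P n`. Grouping the pieces of `Γ` by the piece of `Q` containing them, the part of
`φ (S(f, Γ, T))` over `Q i` is `μ(Q i)` times a weighted average of values of `φ ∘ f` on `Q i`,
hence at most `μ(Q i) φ (f t) + ηᵢ` for some `t ∈ Q i`. So for every functional `φ` and every
`η > 0` some sum over `Q` satisfies `φ (S(f, Γ, T)) ≤ φ (S(f, Q, T')) + η`, and Hahn–Banach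
gives `‖S(f, Γ, T) - x‖ ≤ ε / 2`. The upper sums of the majorant dominate
`∑ⱼ μ(Γⱼ) ‖f(Tⱼ)‖`, which gives absolute convergence over every refinement.
-/

open Filter Topology

theorem exists_forall_dist_le_of_tendsto {α Y : Type*} [PseudoMetricSpace Y]
    {p : ℕ → α → Prop} {F : ℕ → α → Y} {y : Y}
    (h : ∀ a : ℕ → α, (∀ n, p n (a n)) → Tendsto (fun n => F n (a n)) atTop (𝓝 y))
    {ε : ℝ} (hε : 0 < ε) : ∃ n, ∀ a, p n a → dist (F n a) y ≤ ε := by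
  by_contra! hfar
  choose a hpa hdist using hfar
  obtain ⟨N, hN⟩ := Metric.tendsto_atTop.1 (h a hpa) ε hε
  exact (hdist N).not_gt (hN N le_rfl)

theorem exists_tsum_mul_le_of_hasSum {ι : Type*} {w v : ι → ℝ} {W : ℝ} (hw : ∀ j, 0 ≤ w j)
    (hW : HasSum w W) (hW_pos : 0 < W) (hwv : Summable fun j => w j * v j)
    {η : ℝ} (hη : 0 < η) :
    ∃ j, w j ≠ 0 ∧ ∑' j, w j * v j ≤ W * v j + η := by
  by_contra! hlt
  set L := ∑' j, w j * v j
  have hterm : ∀ j, w j * v j ≤ w j * ((L - η) / W) := by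
    intro j
    rcases (hw j).eq_or_lt with hj | hj
    · simp [← hj]
    · refine mul_le_mul_of_nonneg_left ?_ (hw j)
      rw [le_div_iff₀ hW_pos]
      linarith [hlt j hj.ne']
  have hL : L ≤ W * ((L - η) / W) := by
    calc L ≤ ∑' j, w j * ((L - η) / W) := hwv.tsum_le_tsum hterm (hW.summable.mul_right _)
      _ = W * ((L - η) / W) := by rw [tsum_mul_right, hW.tsum_eq]
  rw [mul_div_cancel₀ _ hW_pos.ne'] at hL
  linarith

theorem exists_isSampling {Ω : Type*} [Nonempty Ω] (P : ℕ → Set Ω) : ∃ T, IsSampling P T := by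
  classical
  exact ⟨fun i => if h : (P i).Nonempty then h.some else Classical.arbitrary Ω,
    fun i h => by simpa [dif_pos h] using h.some_mem⟩

theorem isFinerPartition_refl {Ω : Type*} (P : ℕ → Set Ω) : IsFinerPartition P P :=
  fun j => ⟨j, subset_rfl⟩

section RLSum

variable {Ω X : Type*} [MeasurableSpace Ω] [NormedAddCommGroup X]
  {μ : Measure Ω} {f : Ω → X} {A : Set Ω} {P Q Γ : ℕ → Set Ω} {T : ℕ → Ω}

theorem IsRLPartition.eq_iUnion_preimage (hQ : IsRLPartition A Q) (hΓ : IsRLPartition A Γ)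
    {c : ℕ → ℕ} (hc : ∀ j, Γ j ⊆ Q (c j)) (i : ℕ) : Q i = ⋃ j : c ⁻¹' {i}, Γ j := by
  ext t
  simp only [mem_iUnion, Subtype.exists, mem_preimage, mem_singleton_iff, exists_prop]
  constructor
  · intro ht
    obtain ⟨j, htj⟩ := mem_iUnion.1 (hΓ.2.2.symm ▸ hQ.2.2 ▸ mem_iUnion_of_mem i ht)
    refine ⟨j, ?_, htj⟩
    by_contra hne
    exact (hQ.2.1 hne).le_bot ⟨hc j htj, ht⟩
  · rintro ⟨j, rfl, htj⟩
    exact hc j htj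

theorem IsRLPartition.hasSum_measure_preimage [IsFiniteMeasure μ] (hQ : IsRLPartition A Q)
    (hΓ : IsRLPartition A Γ) {c : ℕ → ℕ} (hc : ∀ j, Γ j ⊆ Q (c j)) (i : ℕ) :
    HasSum (fun j : c ⁻¹' {i} => (μ (Γ j)).toReal) (μ (Q i)).toReal := by
  have hunion : μ (⋃ j : c ⁻¹' {i}, Γ j) = ∑' j : c ⁻¹' {i}, μ (Γ j) :=
    measure_iUnion (fun a b hab => hΓ.2.1 (Subtype.coe_injective.ne hab)) fun j => hΓ.1 j
  rw [hQ.eq_iUnion_preimage hΓ hc i, hunion, ENNReal.tsum_toReal_eq fun _ => measure_ne_top μ _]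
  exact (ENNReal.summable_toReal (hunion ▸ measure_ne_top μ _)).hasSum

theorem rlSumAbsConv_of_isFinerPartition [IsFiniteMeasure μ] (hQ : IsRLPartition A Q)
    (hΓ : IsRLPartition A Γ) (hfine : IsFinerPartition Γ Q) {M : ℕ → ℝ}
    (hM : ∀ i, ∀ t ∈ Q i, ‖f t‖ ≤ M i) (hMsum : Summable fun i => M i * (μ (Q i)).toReal)
    (hT : IsSampling Γ T) : RLSumAbsConv μ f Γ T := by
  choose c hc using hfine
  have hbound : ∀ j, (μ (Γ j)).toReal * ‖f (T j)‖ ≤ (μ (Γ j)).toReal * M (c j) := by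
    intro j
    rcases (Γ j).eq_empty_or_nonempty with hempty | hne
    · simp [hempty]
    · exact mul_le_mul_of_nonneg_left (hM _ _ (hc j (hT j hne))) ENNReal.toReal_nonneg
  have hnonneg : ∀ j, 0 ≤ (μ (Γ j)).toReal * M (c j) := fun j =>
    (mul_nonneg ENNReal.toReal_nonneg (norm_nonneg _)).trans (hbound j)
  have hfibre : ∀ i, HasSum (fun j : c ⁻¹' {i} => (μ (Γ j)).toReal * M (c j))
      ((μ (Q i)).toReal * M i) := fun i => by
    simpa only [show ∀ j : c ⁻¹' {i}, c j = i from fun j => j.2]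
      using (hQ.hasSum_measure_preimage hΓ hc i).mul_right (M i)
  have hsum : Summable fun j => (μ (Γ j)).toReal * M (c j) :=
    (summable_partition hnonneg (s := fun i => c ⁻¹' {i}) (by simp)).2
      ⟨fun i => (hfibre i).summable,
        hMsum.congr fun i => by rw [(hfibre i).tsum_eq, mul_comm]⟩
  exact .of_nonneg_of_le (fun j => mul_nonneg ENNReal.toReal_nonneg (norm_nonneg _)) hbound hsum

theorem rlSumAbsConv_of_norm_le [IsFiniteMeasure μ] (hP : IsRLPartition A P) {M : ℕ → ℝ}
    (hM : ∀ i, ∀ t ∈ P i, ‖f t‖ ≤ M i) (hMsum : Summable fun i => M i * (μ (P i)).toReal)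
    (hT : IsSampling P T) : RLSumAbsConv μ f P T :=
  rlSumAbsConv_of_isFinerPartition hP hP (isFinerPartition_refl P) hM hMsum hT

variable [NormedSpace ℝ X]

theorem RLSumAbsConv.summable [CompleteSpace X] (h : RLSumAbsConv μ f P T) :
    Summable fun i => (μ (P i)).toReal • f (T i) :=
  .of_norm <| by
    simpa only [RLSumAbsConv, norm_smul, Real.norm_of_nonneg ENNReal.toReal_nonneg] using h

theorem ContinuousLinearMap.map_rlSum [CompleteSpace X] (φ : StrongDual ℝ X)
    (h : RLSumAbsConv μ f P T) : φ (RLSum μ f P T) = RLSum μ (φ ∘ f) P T := by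
  simp only [RLSum, φ.map_tsum h.summable, map_smul, Function.comp_apply]

theorem IsRLPartition.exists_tsum_preimage_le [Nonempty Ω] [IsFiniteMeasure μ] {h : Ω → ℝ}
    (hQ : IsRLPartition A Q) (hΓ : IsRLPartition A Γ) {c : ℕ → ℕ} (hc : ∀ j, Γ j ⊆ Q (c j))
    (hT : IsSampling Γ T) (hs : Summable fun j => (μ (Γ j)).toReal * h (T j)) (i : ℕ)
    {η : ℝ} (hη : 0 < η) :
    ∃ t, ((Q i).Nonempty → t ∈ Q i) ∧
      ∑' j : c ⁻¹' {i}, (μ (Γ j)).toReal * h (T j) ≤ (μ (Q i)).toReal * h t + η := by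
  have hW := hQ.hasSum_measure_preimage (μ := μ) hΓ hc i
  rcases ENNReal.toReal_nonneg.eq_or_lt with hW_zero | hW_pos
  · obtain ⟨T₀, hT₀⟩ := exists_isSampling Q
    have hzero := (hasSum_zero_iff_of_nonneg fun _ => ENNReal.toReal_nonneg).1 (hW_zero ▸ hW)
    refine ⟨T₀ i, hT₀ i, ?_⟩
    simp only [← hW_zero, zero_mul, zero_add]
    simpa [funext_iff.1 hzero] using hη.le
  · obtain ⟨⟨j, hj⟩, hne, hle⟩ :=
      exists_tsum_mul_le_of_hasSum (fun _ => ENNReal.toReal_nonneg) hW hW_pos (hs.subtype _) hη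
    have hTj : T j ∈ Γ j :=
      hT j (nonempty_of_measure_ne_zero (ENNReal.toReal_ne_zero.1 hne).1)
    exact ⟨T j, fun _ => hj ▸ hc j hTj, hle⟩

theorem IsRLPartition.exists_isSampling_rlSum_le_add [Nonempty Ω] [IsFiniteMeasure μ]
    {h : Ω → ℝ} (hQ : IsRLPartition A Q) (hΓ : IsRLPartition A Γ) (hfine : IsFinerPartition Γ Q)
    {M : ℕ → ℝ} (hM : ∀ i, ∀ t ∈ Q i, ‖h t‖ ≤ M i)
    (hMsum : Summable fun i => M i * (μ (Q i)).toReal) (hT : IsSampling Γ T)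
    {η : ℝ} (hη : 0 < η) :
    ∃ T', IsSampling Q T' ∧ RLSum μ h Γ T ≤ RLSum μ h Q T' + η := by
  have hΓs : Summable fun j => (μ (Γ j)).toReal * h (T j) :=
    (rlSumAbsConv_of_isFinerPartition hQ hΓ hfine hM hMsum hT).summable
  choose c hc using hfine
  have hfibres := hΓs.hasSum.tsum_fiberwise c
  have hgeom := summable_geometric_two' η
  choose T' hT' hle using fun i =>
    hQ.exists_tsum_preimage_le hΓ hc hT hΓs i (by positivity : 0 < η / 2 / 2 ^ i)
  have hQs : Summable fun i => (μ (Q i)).toReal * h (T' i) :=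
    (rlSumAbsConv_of_norm_le hQ hM hMsum hT').summable
  refine ⟨T', hT', ?_⟩
  calc RLSum μ h Γ T = ∑' i, ∑' j : c ⁻¹' {i}, (μ (Γ j)).toReal * h (T j) :=
        hfibres.tsum_eq.symm
    _ ≤ ∑' i, ((μ (Q i)).toReal * h (T' i) + η / 2 / 2 ^ i) :=
        hfibres.summable.tsum_le_tsum hle (hQs.add hgeom)
    _ = RLSum μ h Q T' + η := by rw [hQs.tsum_add hgeom, tsum_geometric_two']; rfl

theorem IsRLPartition.norm_rlSum_sub_le [Nonempty Ω] [IsFiniteMeasure μ] [CompleteSpace X]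
    (hQ : IsRLPartition A Q) (hΓ : IsRLPartition A Γ) (hfine : IsFinerPartition Γ Q)
    {M : ℕ → ℝ} (hM : ∀ i, ∀ t ∈ Q i, ‖f t‖ ≤ M i)
    (hMsum : Summable fun i => M i * (μ (Q i)).toReal) {x : X} {δ : ℝ}
    (hδ : ∀ T', IsSampling Q T' → ‖RLSum μ f Q T' - x‖ ≤ δ) (hT : IsSampling Γ T) :
    ‖RLSum μ f Γ T - x‖ ≤ δ := by
  have hdual : ∀ φ : StrongDual ℝ X, φ (RLSum μ f Γ T - x) ≤ δ * ‖φ‖ := by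
    intro φ
    have hMφ : ∀ i, ∀ t ∈ Q i, ‖(φ ∘ f) t‖ ≤ ‖φ‖ * M i := fun i t ht =>
      (φ.le_opNorm _).trans (mul_le_mul_of_nonneg_left (hM i t ht) (norm_nonneg φ))
    have hMφsum : Summable fun i => ‖φ‖ * M i * (μ (Q i)).toReal := by
      simpa only [mul_assoc] using hMsum.mul_left ‖φ‖
    refine le_of_forall_pos_le_add fun η hη => ?_
    obtain ⟨T', hT', hle⟩ := hQ.exists_isSampling_rlSum_le_add hΓ hfine hMφ hMφsum hT hη
    calc φ (RLSum μ f Γ T - x) = RLSum μ (φ ∘ f) Γ T - φ x := by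
          rw [map_sub, φ.map_rlSum (rlSumAbsConv_of_isFinerPartition hQ hΓ hfine hM hMsum hT)]
      _ ≤ φ (RLSum μ f Q T' - x) + η := by
          rw [map_sub, φ.map_rlSum (rlSumAbsConv_of_norm_le hQ hM hMsum hT')]
          linarith
      _ ≤ ‖φ‖ * ‖RLSum μ f Q T' - x‖ + η := by
          grw [le_abs_self (φ _), ← Real.norm_eq_abs, φ.le_opNorm]
      _ ≤ δ * ‖φ‖ + η := by grw [hδ T' hT', mul_comm]
  obtain ⟨T₀, hT₀⟩ := exists_isSampling Q
  refine NormedSpace.norm_le_dual_bound ℝ _ ((norm_nonneg _).trans (hδ T₀ hT₀)) fun φ =>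
    abs_le.2 ⟨?_, hdual φ⟩
  have := hdual (-φ)
  rw [neg_apply, norm_neg] at this
  linarith

end RLSum

theorem hasRLIntegral_of_seq_partitions_general
    {Ω X : Type*} [MeasurableSpace Ω] [Nonempty Ω]
    [NormedAddCommGroup X] [NormedSpace ℝ X] [CompleteSpace X]
    (μ : Measure Ω) [IsFiniteMeasure μ] (f : Ω → X) (g : Ω → ℝ)
    (hmaj : ∀ t, ‖f t‖ ≤ g t)
    (P : ℕ → ℕ → Set Ω) (hP : ∀ n, IsRLPartition Set.univ (P n))
    (hupper : ∀ n, ∃ M : ℕ → ℝ, (∀ i, ∀ t ∈ P n i, g t ≤ M i) ∧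
      Summable fun i => M i * (μ (P n i)).toReal)
    (x : X)
    (hconv : ∀ T : ℕ → ℕ → Ω, (∀ n, IsSampling (P n) (T n)) →
      Filter.Tendsto (fun n => RLSum μ f (P n) (T n)) Filter.atTop (nhds x)) :
    HasRLIntegral μ f Set.univ x := by
  intro ε hε
  obtain ⟨n, hn⟩ := exists_forall_dist_le_of_tendsto hconv (half_pos hε)
  obtain ⟨M, hgM, hMsum⟩ := hupper n
  have hfM : ∀ i, ∀ t ∈ P n i, ‖f t‖ ≤ M i := fun i t ht => (hmaj t).trans (hgM i t ht)
  refine ⟨P n, hP n, fun Γ hΓ hfine T hT =>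
    ⟨rlSumAbsConv_of_isFinerPartition (hP n) hΓ hfine hfM hMsum hT, ?_⟩⟩
  refine ((hP n).norm_rlSum_sub_le hΓ hfine hfM hMsum (fun T' hT' => ?_) hT).trans_lt
    (half_lt_self hε)
  simpa only [dist_eq_norm] using hn T' hT'

/-- If `f ∈ L̄₁` has integrable majorant `g`, `(P n)` is a sequence of partitions
of `Ω` whose upper integral sums for `g` converge absolutely, and for every choice of sampling
points `T n` for `P n` the sums `S(f, P n, T n)` converge to `x`, then `f` is RL-integrable
with RL integral `x`. -/
theorem hasRLIntegral_of_seq_partitions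
    {Ω X : Type*} [MeasurableSpace Ω] [Nonempty Ω]
    [NormedAddCommGroup X] [NormedSpace ℝ X] [CompleteSpace X]
    (μ : Measure Ω) [IsFiniteMeasure μ] (f : Ω → X) (g : Ω → ℝ)
    (hg : Integrable g μ) (hmaj : ∀ t, ‖f t‖ ≤ g t)
    (P : ℕ → ℕ → Set Ω) (hP : ∀ n, IsRLPartition Set.univ (P n))
    (hupper : ∀ n, ∃ M : ℕ → ℝ, (∀ i, ∀ t ∈ P n i, g t ≤ M i) ∧
      Summable fun i => M i * (μ (P n i)).toReal)
    (x : X)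
    (hconv : ∀ T : ℕ → ℕ → Ω, (∀ n, IsSampling (P n) (T n)) →
      Filter.Tendsto (fun n => RLSum μ f (P n) (T n)) Filter.atTop (nhds x)) :
    HasRLIntegral μ f Set.univ x :=
  hasRLIntegral_of_seq_partitions_general μ f g hmaj P hP hupper x hconv
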